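/- Let D ⊆ ℂ, let λ > 0 and let m: ℂ → [0,∞). Let à be a critical random walk loop soup in D with intensity λ (all killing rates zero) and, conditionally on Ã, attach to each loop γ̃ of à an independent mean-one exponential random variable T_γ̃ and delete γ̃ whenever ∑_{i=0}^{|γ̃|−1} m(γ̃(i))² > T_γ̃ (a condition independent of the choice of rooted representative). Then the retained loops form a random walk loop soup in D with intensity λ and killing rates k_x = 4(e^{m(x)²} − 1), i.e. each unrooted lattice loop γ̃ occurs among the retained loops with multiplicity that is Poisson with mean λν^{u,k}_D(γ̃), independently over distinct unrooted loops. -/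

import Mathlib

open MeasureTheory ProbabilityTheory Set
open scoped Classical

noncomputable section

/-- The embedding of the lattice `ℤ²` into `ℂ`. -/
def latToC (p : ℤ × ℤ) : ℂ := (p.1 : ℂ) + (p.2 : ℂ) * Complex.I

/-- Nearest-neighbour adjacency on `ℤ²`. -/
def latAdj (a b : ℤ × ℤ) : Prop := (a.1 - b.1) ^ 2 + (a.2 - b.2) ^ 2 = 1

/-- A rooted lattice loop: a (periodically extended) nearest-neighbour closed path
on `ℤ²` of length `2n > 0`; `pos i` is the vertex visited at time `i`. -/
structure RWRooted where
  n : ℕ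
  pos : ℤ → ℤ × ℤ
  npos : 0 < n
  step : ∀ i : ℤ, latAdj (pos i) (pos (i + 1))
  periodic : ∀ i : ℤ, pos (i + 2 * n) = pos i

/-- Time-shift equivalence of rooted lattice loops. -/
def rwSetoid : Setoid RWRooted where
  r a b := a.n = b.n ∧ ∃ u : ℤ, ∀ i, b.pos i = a.pos (u + i)
  iseqv := by
    constructor
    · exact fun r => ⟨rfl, 0, fun i => by simp⟩
    · rintro a b ⟨hn, u, hu⟩
      refine ⟨hn.symm, -u, fun i => ?_⟩
      rw [hu (-u + i), show u + (-u + i) = i by ring]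
    · rintro a b c ⟨hn, u, hu⟩ ⟨hn', u', hu'⟩
      refine ⟨hn.trans hn', u + u', fun i => ?_⟩
      rw [hu' i, hu (u' + i), show u + (u' + i) = u + u' + i by ring]

/-- Unrooted lattice loops: equivalence classes of rooted lattice loops under
time shifts. -/
abbrev RWLoop : Type := Quotient rwSetoid

/-- The length (number of steps) `2n` of an unrooted lattice loop. -/
def rwLen (γ : RWLoop) : ℕ := 2 * γ.out.n

/-- The weight of a rooted lattice loop for the rooted random walk loop measure
`ν^{r,k}_D` with killing rates `k`:
`|γ̃|⁻¹ ∏_i p_{x_i, x_{i+1}}` if all vertices lie in `D`, and `0` otherwise. -/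
def rwWeight (k : ℤ × ℤ → ℝ) (D : Set ℂ) (r : RWRooted) : ℝ :=
  (if ∀ i : ℤ, latToC (r.pos i) ∈ D then (1:ℝ) else 0) * (1 / (2 * r.n)) *
    ∏ i ∈ Finset.range (2 * r.n), (k (r.pos (i : ℤ)) + 4)⁻¹

/-- The unrooted random walk loop measure `ν^{u,k}_D(γ̃)`: the sum of the rooted weights
of the (finitely many, equally weighted) rooted representatives of `γ̃`. -/
def nuU (k : ℤ × ℤ → ℝ) (D : Set ℂ) (γ : RWLoop) : ℝ :=
  (Nat.card {r : RWRooted // rwSetoid.r r γ.out}) * rwWeight k D γ.out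

/-- The number of visits `n(x, γ̃)` of the unrooted lattice loop `γ̃` to the vertex `x`. -/
def visitCount (x : ℤ × ℤ) (γ : RWLoop) : ℕ :=
  ((Finset.range (2 * γ.out.n)).filter fun i => γ.out.pos (i : ℤ) = x).card

/-- The killing rates `k_x = 4(e^{m(x)²} - 1)` associated with a mass function `m`. -/
def kOf (m : ℂ → ℝ) (x : ℤ × ℤ) : ℝ := 4 * (Real.exp ((m (latToC x)) ^ 2) - 1)

/-- `∑_{i=0}^{|γ̃|-1} m(γ̃(i))²` for an unrooted lattice loop `γ̃`. -/
def killSum (m : ℂ → ℝ) (γ : RWLoop) : ℝ :=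
  ∑ i ∈ Finset.range (2 * γ.out.n), (m (latToC (γ.out.pos (i : ℤ)))) ^ 2

/-- The Poisson distribution on `ℕ` with (real, nonnegative) mean `r`. -/
def poissonNat (r : ℝ) : Measure ℕ := poissonMeasure r.toNNReal

/-- `IsRWSoup P N λ k D` : under `P`, the multiplicities `N γ̃` form a random walk loop
soup in `D` with intensity `λ` and killing rates `k`, i.e. they are independent Poisson
random variables with means `λ ν^{u,k}_D(γ̃)`. -/
def IsRWSoup {Ω : Type} [MeasurableSpace Ω] (P : Measure Ω) (Nl : RWLoop → Ω → ℕ)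
    (lam : ℝ) (k : ℤ × ℤ → ℝ) (D : Set ℂ) : Prop :=
  iIndepFun (m := fun _ => inferInstance) Nl P ∧
  ∀ γ, Measure.map (Nl γ) P = poissonNat (lam * nuU k D γ)

end

noncomputable section

/-- Index type for the joint family consisting of the loop multiplicities and the
exponential marks attached to the individual loop occurrences. -/
def mixβ : RWLoop ⊕ RWLoop × ℕ → Type
  | Sum.inl _ => ℕ
  | Sum.inr _ => ℝ

/-- The measurable structures on the members of the joint family. -/
def mixMS : ∀ i, MeasurableSpace (mixβ i)
  | Sum.inl _ => (inferInstance : MeasurableSpace ℕ)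
  | Sum.inr _ => (inferInstance : MeasurableSpace ℝ)

/-- The joint family: multiplicities `N γ̃` and exponential marks `T γ̃ c` (one for each
copy `c` of each loop `γ̃`). -/
def mixF {Ω : Type} (Nl : RWLoop → Ω → ℕ) (T : RWLoop → ℕ → Ω → ℝ) : ∀ i, Ω → mixβ i
  | Sum.inl γ => Nl γ
  | Sum.inr p => T p.1 p.2

/-! Under the killing rates `k_x = 4(e^{m(x)²} - 1)` a loop `γ̃` has weight
`∏ᵢ (k_{γ̃(i)} + 4)⁻¹ = e^{-∑ᵢ m(γ̃(i))²} ∏ᵢ 4⁻¹`, so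
`ν^{u,k}_D(γ̃) = e^{-∑ᵢ m(γ̃(i))²} ν^{u,0}_D(γ̃)`; and a mean-one exponential mark exceeds
`∑ᵢ m(γ̃(i))²` with probability exactly `e^{-∑ᵢ m(γ̃(i))²}`. Keeping each of `N ~ Poisson(μ)`
points independently with probability `p` leaves `Poisson(pμ)` points (sum the binomial
probabilities against the Poisson weights), and the thinned multiplicities of distinct loops stay
independent, each being a function of its own loop's multiplicity and marks only. -/

open scoped Finset NNReal ENNReal Nat

open Real in
lemma hasSum_poisson_mul_binomial (r p : ℝ) (j : ℕ) :
    HasSum (fun n : ℕ => exp (-r) * r ^ n / n ! * (n.choose j * p ^ j * (1 - p) ^ (n - j)))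
      (exp (-(p * r)) * (p * r) ^ j / j !) := by
  refine (hasSum_nat_add_iff' j).mp ?_
  rw [Finset.sum_eq_zero fun n hn => by simp [Nat.choose_eq_zero_of_lt (Finset.mem_range.mp hn)],
    sub_zero]
  have hterm : ∀ d : ℕ, exp (-r) * r ^ (d + j) / (d + j)! *
      ((d + j).choose j * p ^ j * (1 - p) ^ (d + j - j)) =
        exp (-r) * (p * r) ^ j / j ! * (((1 - p) * r) ^ d / d !) := fun d => by
    have hchoose : ((d + j).choose j : ℝ) = (d + j)! / (d ! * j !) := by
      rw [eq_div_iff (by positivity), ← mul_assoc]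
      exact_mod_cast Nat.add_choose_mul_factorial_mul_factorial d j
    rw [Nat.add_sub_cancel, hchoose, pow_add, mul_pow, mul_pow]
    field_simp
  have hexp := (NormedSpace.expSeries_div_hasSum_exp ((1 - p) * r)).mul_left
    (exp (-r) * (p * r) ^ j / j !)
  rw [← Real.exp_eq_exp_ℝ, ← funext hterm] at hexp
  have hvalue : exp (-r) * (p * r) ^ j / j ! * exp ((1 - p) * r) =
      exp (-(p * r)) * (p * r) ^ j / j ! := by
    have hsplit : exp (-(p * r)) = exp (-r) * exp ((1 - p) * r) := by
      rw [← exp_add]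
      ring_nf
    rw [hsplit]
    ring
  rwa [hvalue] at hexp

namespace ProbabilityTheory

open Real in
lemma tsum_poissonMeasure_mul_binomial (μ p : ℝ≥0) (hp : p ≤ 1) (j : ℕ) :
    ∑' n, Po(μ) {n} * (n.choose j * (p : ℝ≥0∞) ^ j * (1 - p) ^ (n - j)) =
      Po(p * μ) {j} := by
  have hq : (0 : ℝ) ≤ 1 - p := sub_nonneg.2 hp
  have hbinom : ∀ n : ℕ, (n.choose j * (p : ℝ≥0∞) ^ j * (1 - p) ^ (n - j)) =
      ENNReal.ofReal (n.choose j * (p : ℝ) ^ j * (1 - p) ^ (n - j)) := fun n => by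
    rw [ENNReal.ofReal_mul (by positivity), ENNReal.ofReal_mul (by positivity),
      ENNReal.ofReal_pow p.coe_nonneg, ENNReal.ofReal_pow hq, ENNReal.ofReal_natCast,
      ENNReal.ofReal_sub _ p.coe_nonneg, ENNReal.ofReal_one, ENNReal.ofReal_coe_nnreal]
  have hterm_nonneg : ∀ n : ℕ,
      0 ≤ exp (-μ) * μ ^ n / n ! * (n.choose j * (p : ℝ) ^ j * (1 - p) ^ (n - j)) :=
    fun n => mul_nonneg (by positivity) (mul_nonneg (by positivity) (pow_nonneg hq _))
  have hsum := hasSum_poisson_mul_binomial μ p j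
  rw [tsum_congr fun n => by
      rw [poissonMeasure_singleton, hbinom, ← ENNReal.ofReal_mul (by positivity)],
    ← ENNReal.ofReal_tsum_of_nonneg hterm_nonneg hsum.summable, hsum.tsum_eq,
    poissonMeasure_singleton, NNReal.coe_mul]

section Independence

variable {Ω ι κ : Type*} {mΩ : MeasurableSpace Ω} {P : Measure Ω}

lemma iIndep.iIndep_iSup_fibers {m : ι → MeasurableSpace Ω} (h_le : ∀ i, m i ≤ mΩ)
    (h : iIndep m P) (q : ι → κ) : iIndep (fun k => ⨆ i ∈ q ⁻¹' {k}, m i) P := by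
  rw [iIndep_iff]
  intro s f hf
  induction s using Finset.induction_on with
  | empty => simp [h.isProbabilityMeasure]
  | insert k s hk ih =>
    have hf' : ∀ k' ∈ s, MeasurableSet[⨆ i ∈ q ⁻¹' s, m i] (f k') := fun k' hk' => by
      have hle : (⨆ i ∈ q ⁻¹' {k'}, m i) ≤ ⨆ i ∈ q ⁻¹' s, m i :=
        biSup_mono fun i (hi : q i = k') => show q i ∈ (s : Set κ) from hi ▸ hk'
      exact hle _ (hf k' (Finset.mem_insert_of_mem hk'))
    have hdisj : Disjoint (q ⁻¹' {k}) (q ⁻¹' s) :=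
      (Set.disjoint_singleton_left.mpr (by exact_mod_cast hk)).preimage q
    rw [Finset.set_biInter_insert, Finset.prod_insert hk,
      ← ih fun k' hk' => hf k' (Finset.mem_insert_of_mem hk')]
    exact (Indep_iff _ _ _).mp (indep_iSup_of_disjoint h_le h hdisj) _ _
      (hf k (Finset.mem_insert_self k s)) (MeasurableSet.biInter s.countable_toSet hf')

lemma iIndep.indep_iSup_of_notMem_range {m : ι → MeasurableSpace Ω} (h_le : ∀ i, m i ≤ mΩ)
    (h : iIndep m P) {i₀ : ι} {e : κ → ι} (hi₀ : i₀ ∉ Set.range e) :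
    Indep (m i₀) (⨆ k, m (e k)) P := by
  have := indep_iSup_of_disjoint h_le h (Set.disjoint_singleton_left.mpr hi₀)
  rwa [iSup_singleton, iSup_range] at this

end Independence

section Thinning

variable {Ω : Type*} {mΩ : MeasurableSpace Ω} {P : Measure Ω}

def thinnedCount (N : Ω → ℕ) (E : ℕ → Set Ω) (ω : Ω) : ℕ :=
  #{c ∈ Finset.range (N ω) | ω ∈ E c}

lemma measurable_card_filter_range {E : ℕ → Set Ω} (hE : ∀ c, MeasurableSet (E c))
    (n : ℕ) : Measurable fun ω => #{c ∈ Finset.range n | ω ∈ E c} := by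
  simp only [Finset.card_filter]
  exact Finset.measurable_sum _ fun c _ => Measurable.ite (hE c) measurable_const measurable_const

lemma measurable_thinnedCount {N : Ω → ℕ} {E : ℕ → Set Ω} (hN : Measurable N)
    (hE : ∀ c, MeasurableSet (E c)) : Measurable (thinnedCount N E) :=
  (measurable_from_prod_countable_right
    (f := fun p : ℕ × Ω => #{c ∈ Finset.range p.1 | p.2 ∈ E c})
    (measurable_card_filter_range hE)).comp (hN.prodMk measurable_id)

lemma setOf_filter_range_eq_iInter (E : ℕ → Set Ω) {n : ℕ} {A : Finset ℕ}
    (hA : A ⊆ Finset.range n) :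
    {ω | {c ∈ Finset.range n | ω ∈ E c} = A} =
      ⋂ c ∈ Finset.range n, if c ∈ A then E c else (E c)ᶜ := by
  ext ω
  simp only [Set.mem_ofPred_eq, Set.mem_iInter, Finset.ext_iff, Finset.mem_filter,
    Finset.mem_range]
  refine ⟨fun h c hc => ?_, fun h c => ?_⟩
  · split_ifs <;> grind
  · have hAn : c ∈ A → c < n := fun hcA => Finset.mem_range.mp (hA hcA)
    by_cases hc : c < n
    · have := h c hc
      split_ifs at this <;> grind
    · grind

lemma iIndepSet.measure_filter_range_eq {E : ℕ → Set Ω} (h : iIndepSet E P)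
    (hE : ∀ c, MeasurableSet (E c)) {p : ℝ≥0∞} (hp : ∀ c, P (E c) = p) {n : ℕ}
    {A : Finset ℕ} (hA : A ⊆ Finset.range n) :
    P {ω | {c ∈ Finset.range n | ω ∈ E c} = A} = p ^ #A * (1 - p) ^ (n - #A) := by
  have := h.isProbabilityMeasure
  rw [setOf_filter_range_eq_iInter E hA, (iIndepSet_iff _ _).mp h _ fun c _ => ?_]
  · have hprob : ∀ c, P (if c ∈ A then E c else (E c)ᶜ) = if c ∈ A then p else 1 - p :=
      fun c => by
        split_ifs
        · exact hp c
        · rw [prob_compl_eq_one_sub (hE c), hp c]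
    rw [Finset.prod_congr rfl fun c _ => hprob c, Finset.prod_ite, Finset.prod_const,
      Finset.prod_const, Finset.filter_mem_eq_inter, Finset.inter_eq_right.mpr hA,
      Finset.filter_notMem_eq_sdiff, Finset.card_sdiff_of_subset hA, Finset.card_range]
  · split_ifs
    · exact MeasurableSpace.measurableSet_generateFrom rfl
    · exact (MeasurableSpace.measurableSet_generateFrom (Set.mem_singleton (E c))).compl

lemma iIndepSet.measure_card_filter_range_eq {E : ℕ → Set Ω} (h : iIndepSet E P)
    (hE : ∀ c, MeasurableSet (E c)) {p : ℝ≥0∞} (hp : ∀ c, P (E c) = p) (n j : ℕ) :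
    P {ω | #{c ∈ Finset.range n | ω ∈ E c} = j} = n.choose j * p ^ j * (1 - p) ^ (n - j) := by
  have hunion : {ω | #{c ∈ Finset.range n | ω ∈ E c} = j} =
      ⋃ A ∈ Finset.powersetCard j (Finset.range n),
        {ω | {c ∈ Finset.range n | ω ∈ E c} = A} := by
    ext ω
    simp only [Set.mem_ofPred_eq, Set.mem_iUnion, Finset.mem_powersetCard, exists_prop]
    exact ⟨fun hj => ⟨_, ⟨Finset.filter_subset _ _, hj⟩, rfl⟩,
      fun ⟨A, ⟨_, hA⟩, hω⟩ => hω ▸ hA⟩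
  rw [hunion, measure_biUnion_finset]
  · rw [Finset.sum_congr rfl fun A hA => by
        obtain ⟨hsub, hcard⟩ := Finset.mem_powersetCard.mp hA
        rw [h.measure_filter_range_eq hE hp hsub, hcard], Finset.sum_const,
      Finset.card_powersetCard, Finset.card_range, nsmul_eq_mul, mul_assoc]
  · exact fun A _ B _ hAB => Set.disjoint_left.mpr fun ω h₁ h₂ => hAB (h₁.symm.trans h₂)
  · intro A hA
    rw [setOf_filter_range_eq_iInter E (Finset.mem_powersetCard.mp hA).1]
    refine Finset.measurableSet_biInter _ fun c _ => ?_
    split_ifs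
    · exact hE c
    · exact (hE c).compl

theorem map_thinnedCount_eq_poissonMeasure {N : Ω → ℕ} {E : ℕ → Set Ω} {μ p : ℝ≥0}
    (hN : Measurable N) (hE : ∀ c, MeasurableSet (E c))
    (hindep : Indep (MeasurableSpace.comap N inferInstance)
      (⨆ c, MeasurableSpace.generateFrom {E c}) P)
    (hiid : iIndepSet E P) (hlawN : P.map N = Po(μ)) (hp : ∀ c, P (E c) = p) :
    P.map (thinnedCount N E) = Po(p * μ) := by
  have hp1 : p ≤ 1 := by
    have := hiid.isProbabilityMeasure
    exact_mod_cast hp 0 ▸ prob_le_one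
  have hK : ∀ n j, MeasurableSet[⨆ c, MeasurableSpace.generateFrom {E c}]
      {ω | #{c ∈ Finset.range n | ω ∈ E c} = j} :=
    fun n j => measurable_card_filter_range (mΩ := ⨆ c, MeasurableSpace.generateFrom {E c})
      (fun c => le_iSup (fun c => MeasurableSpace.generateFrom {E c}) c _
        (MeasurableSpace.measurableSet_generateFrom (Set.mem_singleton (E c)))) n
      (measurableSet_singleton j)
  refine Measure.ext_of_singleton fun j => ?_
  have hdecomp : thinnedCount N E ⁻¹' {j} =
      ⋃ n, N ⁻¹' {n} ∩ {ω | #{c ∈ Finset.range n | ω ∈ E c} = j} := by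
    ext ω
    simp [thinnedCount]
  rw [Measure.map_apply (measurable_thinnedCount hN hE) (measurableSet_singleton j), hdecomp,
    measure_iUnion, ← tsum_poissonMeasure_mul_binomial μ p hp1 j]
  · refine tsum_congr fun n => ?_
    rw [(Indep_iff _ _ _).mp hindep _ _ ⟨{n}, measurableSet_singleton n, rfl⟩ (hK n j),
      ← Measure.map_apply hN (measurableSet_singleton n), hlawN,
      hiid.measure_card_filter_range_eq hE hp]
  · exact fun a b hab =>
      (pairwise_disjoint_fiber N hab).mono Set.inter_subset_left Set.inter_subset_left
  · exact fun n => (hN (measurableSet_singleton n)).inter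
      (measurable_card_filter_range hE n (measurableSet_singleton j))

end Thinning

open Real in
lemma expMeasure_one_Ici {s : ℝ} (hs : 0 ≤ s) :
    expMeasure 1 (Ici s) = ENNReal.ofReal (exp (-s)) := by
  have hpdf : ∀ x ∈ Ici s, gammaPDF 1 1 x = ENNReal.ofReal (exp (-x)) := fun x hx => by
    simp [gammaPDF_of_nonneg (hs.trans hx), Real.Gamma_one]
  have hint : IntegrableOn (fun x => exp (-x)) (Ioi s) := by
    simpa using exp_neg_integrableOn_Ioi s zero_lt_one
  rw [expMeasure, gammaMeasure, withDensity_apply _ measurableSet_Ici,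
    setLIntegral_congr_fun measurableSet_Ici hpdf, ← Measure.restrict_congr_set Ioi_ae_eq_Ici,
    ← ofReal_integral_eq_lintegral_ofReal hint (ae_of_all _ fun x => (exp_pos _).le),
    integral_exp_neg_Ioi]

end ProbabilityTheory

open Real in
lemma rwWeight_kOf (m : ℂ → ℝ) (D : Set ℂ) (r : RWRooted) :
    rwWeight (kOf m) D r = exp (-∑ i ∈ Finset.range (2 * r.n), m (latToC (r.pos i)) ^ 2) *
      rwWeight (fun _ => 0) D r := by
  have hfactor : ∀ x, (kOf m x + 4)⁻¹ = exp (-(m (latToC x) ^ 2)) * (0 + 4)⁻¹ := fun x => by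
    rw [kOf, exp_neg]
    field_simp
    ring
  simp only [rwWeight, hfactor, Finset.prod_mul_distrib, ← Finset.sum_neg_distrib, exp_sum]
  ring

lemma nuU_kOf (m : ℂ → ℝ) (D : Set ℂ) (γ : RWLoop) :
    nuU (kOf m) D γ = Real.exp (-killSum m γ) * nuU (fun _ => 0) D γ := by
  rw [nuU, nuU, rwWeight_kOf, killSum]
  ring

lemma killSum_nonneg (m : ℂ → ℝ) (γ : RWLoop) : 0 ≤ killSum m γ :=
  Finset.sum_nonneg fun _ _ => sq_nonneg _

section MixedFamily

variable {Ω : Type} {Nl : RWLoop → Ω → ℕ} {T : RWLoop → ℕ → Ω → ℝ}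

lemma measurableSet_comap_mixF_mark (γ : RWLoop) (c : ℕ) (s : ℝ) :
    MeasurableSet[(mixMS (.inr (γ, c))).comap (mixF Nl T (.inr (γ, c)))] {ω | s ≤ T γ c ω} :=
  ⟨(Ici s : Set ℝ), (measurableSet_Ici : MeasurableSet (Ici s)), rfl⟩

variable [MeasurableSpace Ω] {P : Measure Ω}

lemma comap_mixF_le (hmeas : ∀ γ, Measurable (Nl γ)) (hmeasT : ∀ γ c, Measurable (T γ c))
    (i : RWLoop ⊕ RWLoop × ℕ) :
    (mixMS i).comap (mixF Nl T i) ≤ ‹MeasurableSpace Ω› := by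
  rcases i with γ | ⟨γ, c⟩
  exacts [(hmeas γ).comap_le, (hmeasT γ c).comap_le]

lemma iIndepFun_thinnedCount_mixF (hmeas : ∀ γ, Measurable (Nl γ))
    (hmeasT : ∀ γ c, Measurable (T γ c)) (hjoint : iIndepFun (m := mixMS) (mixF Nl T) P)
    (s : RWLoop → ℝ) :
    iIndepFun (fun γ => thinnedCount (Nl γ) fun c => {ω | s γ ≤ T γ c ω}) P := by
  set σ : RWLoop ⊕ RWLoop × ℕ → MeasurableSpace Ω := fun i => (mixMS i).comap (mixF Nl T i)
  have hfibers := iIndep.iIndep_iSup_fibers (m := σ) (comap_mixF_le hmeas hmeasT) hjoint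
    (Sum.elim id Prod.fst)
  rw [iIndepFun_iff_iIndep]
  refine iIndep_of_iIndep_of_le hfibers fun γ => ?_
  rw [← measurable_iff_comap_le]
  have hcount : σ (.inl γ) ≤ ⨆ i ∈ Sum.elim id Prod.fst ⁻¹' {γ}, σ i :=
    le_biSup σ (show Sum.inl γ ∈ Sum.elim id Prod.fst ⁻¹' {γ} from rfl)
  have hmark (c : ℕ) : σ (.inr (γ, c)) ≤ ⨆ i ∈ Sum.elim id Prod.fst ⁻¹' {γ}, σ i :=
    le_biSup σ (show Sum.inr (γ, c) ∈ Sum.elim id Prod.fst ⁻¹' {γ} from rfl)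
  exact measurable_thinnedCount (mΩ := ⨆ i ∈ Sum.elim id Prod.fst ⁻¹' {γ}, σ i)
    (measurable_iff_comap_le.mpr hcount)
    fun c => hmark c _ (measurableSet_comap_mixF_mark γ c (s γ))

lemma map_thinnedCount_mixF (hmeas : ∀ γ, Measurable (Nl γ))
    (hmeasT : ∀ γ c, Measurable (T γ c)) (hjoint : iIndepFun (m := mixMS) (mixF Nl T) P)
    {γ : RWLoop} {μ : ℝ≥0} (hN : P.map (Nl γ) = Po(μ))
    (hT : ∀ c, P.map (T γ c) = expMeasure 1) {s : ℝ} (hs : 0 ≤ s) :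
    P.map (thinnedCount (Nl γ) fun c => {ω | s ≤ T γ c ω}) =
      Po((Real.exp (-s)).toNNReal * μ) := by
  have hle := comap_mixF_le hmeas hmeasT
  have hmark := fun c => MeasurableSpace.generateFrom_singleton_le
    (measurableSet_comap_mixF_mark (Nl := Nl) (T := T) γ c s)
  have hindep := indep_of_indep_of_le_right (iIndep.indep_iSup_of_notMem_range hle hjoint
    (i₀ := .inl γ) (e := fun c => .inr (γ, c)) (by simp)) (iSup_mono hmark)
  have hiid : iIndepSet (fun c => {ω | s ≤ T γ c ω}) P := by
    rw [iIndepSet_iff_iIndep]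
    exact iIndep_of_iIndep_of_le ((iIndepFun_iff_iIndep _ _ _).mp hjoint
      |>.precomp (g := fun c => .inr (γ, c)) fun _ _ h => by simpa using h) hmark
  refine map_thinnedCount_eq_poissonMeasure (hmeas γ)
    (fun c => hle _ _ (measurableSet_comap_mixF_mark γ c s)) hindep hiid hN fun c => ?_
  change P (T γ c ⁻¹' Ici s) = ENNReal.ofReal (Real.exp (-s))
  rw [← Measure.map_apply (hmeasT γ c) measurableSet_Ici, hT, expMeasure_one_Ici hs]

end MixedFamily

theorem rw_massive_soup_from_critical_thinning_general
    (D : Set ℂ) (lam : ℝ)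
    (m : ℂ → ℝ)
    {Ω : Type} [MeasurableSpace Ω] (P : Measure Ω)
    (Nl : RWLoop → Ω → ℕ) (T : RWLoop → ℕ → Ω → ℝ)
    (hmeas : ∀ γ, Measurable (Nl γ)) (hmeasT : ∀ γ c, Measurable (T γ c))
    (hjoint : iIndepFun (m := mixMS) (mixF Nl T) P)
    (hN : ∀ γ, Measure.map (Nl γ) P = poissonNat (lam * nuU (fun _ => 0) D γ))
    (hT : ∀ γ c, Measure.map (T γ c) P = expMeasure 1) :
    IsRWSoup P
      (fun γ ω => ((Finset.range (Nl γ ω)).filter fun c => killSum m γ ≤ T γ c ω).card)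
      lam (kOf m) D := by
  -- the two filters differ only in their `Decidable` instances
  have hcount :
      (fun γ ω => ((Finset.range (Nl γ ω)).filter fun c => killSum m γ ≤ T γ c ω).card) =
        fun γ => thinnedCount (Nl γ) fun c => {ω | killSum m γ ≤ T γ c ω} := by
    funext γ ω
    unfold thinnedCount
    congr
  rw [hcount]
  refine ⟨iIndepFun_thinnedCount_mixF hmeas hmeasT hjoint (killSum m), fun γ => ?_⟩
  rw [map_thinnedCount_mixF hmeas hmeasT hjoint (hN γ) (hT γ) (killSum_nonneg m γ), nuU_kOf,
    mul_left_comm]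
  simp only [poissonNat, Real.toNNReal_mul (Real.exp_pos _).le]

/-- Thinning a critical random walk loop soup in `D` with intensity `λ`
by attaching to each loop occurrence `γ̃` an independent mean-one exponential variable
`T_γ̃` and deleting it whenever `∑_{i<|γ̃|} m(γ̃(i))² > T_γ̃` produces a random walk loop
soup in `D` with intensity `λ` and killing rates `k_x = 4(e^{m(x)²} - 1)`. -/
theorem rw_massive_soup_from_critical_thinning
    (D : Set ℂ) (lam : ℝ) (hlam : 0 < lam)
    (m : ℂ → ℝ) (hm0 : ∀ z, 0 ≤ m z)
    {Ω : Type} [MeasurableSpace Ω] (P : Measure Ω) [IsProbabilityMeasure P]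
    (Nl : RWLoop → Ω → ℕ) (T : RWLoop → ℕ → Ω → ℝ)
    (hmeas : ∀ γ, Measurable (Nl γ)) (hmeasT : ∀ γ c, Measurable (T γ c))
    (hjoint : iIndepFun (m := mixMS) (mixF Nl T) P)
    (hN : ∀ γ, Measure.map (Nl γ) P = poissonNat (lam * nuU (fun _ => 0) D γ))
    (hT : ∀ γ c, Measure.map (T γ c) P = expMeasure 1) :
    IsRWSoup P
      (fun γ ω => ((Finset.range (Nl γ ω)).filter fun c => killSum m γ ≤ T γ c ω).card)
      lam (kOf m) D :=
  rw_massive_soup_from_critical_thinning_general D lam m P Nl T hmeas hmeasT hjoint hN hT
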